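/- With the lifting setup below, regard each Eisenbud operator as a morphism t̂_k : C → Σ²C and ŝ_k : D → Σ²D in the homotopy category K(R) of complexes of R-modules (where Σ denotes the shift functor). Then precomposition with t̂_k and postcomposition with ŝ_k induce the same action on homotopy classes of maps from C into shifts of D: for every integer j and every morphism α : C → Σ^j D in K(R), one has (Σ^j ŝ_k)∘α = (Σ²α)∘t̂_k as morphisms C → Σ^{j+2}D in K(R). -/

import Mathlib

/-!
Lift the representative `α` to `Q`-linear maps `a`. Reducing modulo `I = (f₁,…,f_c)`, the
chain-map defect `a d̃ − (−1)ʲ d̃ a` lies in `I · Hom`, so by projectivity of `C̃` it splits as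
`Σ f_k λ_k`. Expanding `d̃² = Σ f_k t̃_k` on both sides shows
`Σ_k f_k (a t̃_k − s̃_k a − λ_k d̃ − (−1)ʲ d̃ λ_k) = 0`; since `f` is regular on the free module
`D̃`, the vanishing of the Koszul homology `H₁` forces each summand into `I D̃`. Hence modulo `I`
the map `−λ_k ⊗ R` is a homotopy between `ŝ_k α` and `α t̂_k`.
-/

open TensorProduct

/-- The quotient ring `R = Q/(f₁,…,f_c)`. -/
abbrev Rquot (Q : Type) [CommRing Q] {c : ℕ} (f : Fin c → Q) : Type :=
  Q ⧸ Ideal.span (Set.range f)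

/-- Transport along an equality of indices (the identity map). -/
def lcast (Q : Type) [CommRing Q] {c : ℕ} (f : Fin c → Q)
    (Ct : ℤ → Type) [∀ n, AddCommGroup (Ct n)] [∀ n, Module Q (Ct n)]
    {a b : ℤ} (h : a = b) :
    (Rquot Q f ⊗[Q] Ct a) →ₗ[Rquot Q f] (Rquot Q f ⊗[Q] Ct b) := by
  subst h; exact LinearMap.id

open RingTheory.Sequence

theorem Ideal.ofList_ofFn {R : Type*} [Semiring R] {n : ℕ} (f : Fin n → R) :
    Ideal.ofList (List.ofFn f) = Ideal.span (Set.range f) := by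
  simp only [Ideal.ofList, List.mem_ofFn]
  rfl

section SpanRangeSMulTop

variable {R M : Type*} [CommRing R] [AddCommGroup M] [Module R M] {ι : Type*} [Fintype ι]

theorem Submodule.mem_span_range_smul_top_iff (f : ι → R) (x : M) :
    x ∈ Ideal.span (Set.range f) • (⊤ : Submodule R M) ↔ ∃ y : ι → M, ∑ i, f i • y i = x := by
  refine ⟨fun hx => ?_, ?_⟩
  · refine Submodule.smul_induction_on (p := fun x => ∃ y : ι → M, ∑ i, f i • y i = x) hx
      (fun r hr m _ => ?_) fun _ _ ⟨y, hy⟩ ⟨y', hy'⟩ => ⟨y + y', ?_⟩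
    · obtain ⟨a, rfl⟩ := Ideal.mem_span_range_iff_exists_fun.1 hr
      exact ⟨fun i => a i • m, by simp only [smul_smul, Finset.sum_smul, mul_comm]⟩
    · simp only [Pi.add_apply, smul_add, Finset.sum_add_distrib, hy, hy']
  · rintro ⟨y, rfl⟩
    exact Submodule.sum_mem _ fun i _ =>
      Submodule.smul_mem_smul (Ideal.subset_span ⟨i, rfl⟩) Submodule.mem_top

theorem exists_eq_sum_smul_of_forall_mem_smul_top {P N : Type*} [AddCommGroup P] [Module R P]
    [Module.Projective R P] [AddCommGroup N] [Module R N] (f : ι → R) (g : P →ₗ[R] N)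
    (hg : ∀ x, g x ∈ Ideal.span (Set.range f) • (⊤ : Submodule R N)) :
    ∃ h : ι → P →ₗ[R] N, ∀ x, g x = ∑ i, f i • h i x := by
  let φ : (ι → N) →ₗ[R] N := ∑ i, f i • LinearMap.proj i
  have hφ : ∀ x, g x ∈ LinearMap.range φ := fun x => by
    obtain ⟨y, hy⟩ := (Submodule.mem_span_range_smul_top_iff f _).1 (hg x)
    exact ⟨y, by simpa [φ] using hy⟩
  obtain ⟨h, hh⟩ := Module.projective_lifting_property φ.rangeRestrict (g.codRestrict _ hφ)
    φ.surjective_rangeRestrict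
  refine ⟨fun i => LinearMap.proj i ∘ₗ h, fun x => ?_⟩
  simpa [φ] using congrArg Subtype.val (LinearMap.congr_fun hh x).symm

end SpanRangeSMulTop

theorem RingTheory.Sequence.IsWeaklyRegular.mem_smul_top_of_sum_smul_eq_zero
    {R M : Type*} [CommRing R] [AddCommGroup M] [Module R M] {n : ℕ} {f : Fin n → R}
    (hf : IsWeaklyRegular M (List.ofFn f)) {y : Fin n → M} (hy : ∑ i, f i • y i = 0)
    (i : Fin n) : y i ∈ Ideal.span (Set.range f) • (⊤ : Submodule R M) := by
  induction n with
  | zero => exact i.elim0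
  | succ n ih =>
    set g : Fin n → R := fun i => f i.castSucc
    set J := Ideal.span (Set.range g)
    rw [List.ofFn_succ', List.concat_eq_append, isWeaklyRegular_append_iff,
      isWeaklyRegular_singleton_iff, Ideal.ofList_ofFn] at hf
    rw [Fin.sum_univ_castSucc] at hy
    have hJ : J ≤ Ideal.span (Set.range f) := Ideal.span_mono (Set.range_comp_subset_range _ _)
    have hlast : y (Fin.last n) ∈ J • (⊤ : Submodule R M) := by
      refine mem_of_isSMulRegular_quotient_of_smul_mem hf.2 ?_
      rw [eq_neg_of_add_eq_zero_right hy]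
      exact neg_mem ((Submodule.mem_span_range_smul_top_iff g _).2 ⟨_, rfl⟩)
    obtain ⟨z, hz⟩ := (Submodule.mem_span_range_smul_top_iff g _).1 hlast
    have hyz : ∑ i, g i • (y i.castSucc + f (Fin.last n) • z i) = 0 := by
      simp only [smul_add, Finset.sum_add_distrib, smul_comm (g _) (f _), ← Finset.smul_sum, hz]
      exact hy
    induction i using Fin.lastCases with
    | last => exact Submodule.smul_mono_left hJ hlast
    | cast i =>
      have hfz : f (Fin.last n) • z i ∈ Ideal.span (Set.range f) • (⊤ : Submodule R M) :=
        Submodule.smul_mem_smul (Ideal.subset_span ⟨_, rfl⟩) Submodule.mem_top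
      simpa using Submodule.sub_mem _ (Submodule.smul_mono_left hJ (ih hf.1 hyz i)) hfz

theorem RingTheory.Sequence.IsWeaklyRegular.of_flat_module {R : Type*} (M : Type*) [CommRing R]
    [AddCommGroup M] [Module R M] [Module.Flat R M] {rs : List R}
    (h : IsWeaklyRegular R rs) : IsWeaklyRegular M rs :=
  ((TensorProduct.lid R M).isWeaklyRegular_congr rs).1 h.isWeaklyRegular_rTensor

namespace TensorProduct

variable {R M : Type*} [CommRing R] [AddCommGroup M] [Module R M] (I : Ideal R)

theorem quotient_one_tmul_surjective :
    Function.Surjective fun x : M => (1 : R ⧸ I) ⊗ₜ[R] x := by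
  intro t
  obtain ⟨x, hx⟩ := Submodule.Quotient.mk_surjective _ (quotTensorEquivQuotSMul M I t)
  refine ⟨x, ?_⟩
  dsimp only
  rw [← quotTensorEquivQuotSMul_symm_mk, hx, LinearEquiv.symm_apply_apply]

theorem quotient_one_tmul_eq_one_tmul_iff {x y : M} :
    (1 : R ⧸ I) ⊗ₜ[R] x = 1 ⊗ₜ y ↔ x - y ∈ I • (⊤ : Submodule R M) := by
  rw [← (quotTensorEquivQuotSMul M I).injective.eq_iff, quotTensorEquivQuotSMul_mk_one_tmul,
    quotTensorEquivQuotSMul_mk_one_tmul, Submodule.Quotient.eq]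

theorem exists_quotient_lift_of_projective {N : Type*} [Module.Projective R M] [AddCommGroup N]
    [Module R N] (β : (R ⧸ I) ⊗[R] M →ₗ[R ⧸ I] (R ⧸ I) ⊗[R] N) :
    ∃ g : M →ₗ[R] N, ∀ x, β (1 ⊗ₜ x) = 1 ⊗ₜ g x := by
  obtain ⟨g, hg⟩ := Module.projective_lifting_property (TensorProduct.mk R (R ⧸ I) N 1)
    (β.restrictScalars R ∘ₗ TensorProduct.mk R (R ⧸ I) M 1) (quotient_one_tmul_surjective I)
  exact ⟨g, fun x => (LinearMap.congr_fun hg x).symm⟩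

end TensorProduct

theorem sum_smul_eisenbud_bracket_eq_zero {Q : Type*} [CommRing Q] {c : ℕ} (f : Fin c → Q)
    {C₀ C₁ C₂ D₀ D₁ D₂ : Type*} [AddCommGroup C₀] [Module Q C₀] [AddCommGroup C₁] [Module Q C₁]
    [AddCommGroup C₂] [Module Q C₂] [AddCommGroup D₀] [Module Q D₀] [AddCommGroup D₁]
    [Module Q D₁] [AddCommGroup D₂] [Module Q D₂]
    (dC₀ : C₁ →ₗ[Q] C₀) (dC₁ : C₂ →ₗ[Q] C₁) (tC : Fin c → C₂ →ₗ[Q] C₀)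
    (dD₀ : D₁ →ₗ[Q] D₀) (dD₁ : D₂ →ₗ[Q] D₁) (tD : Fin c → D₂ →ₗ[Q] D₀)
    (hC : ∀ x, dC₀ (dC₁ x) = ∑ k, f k • tC k x) (hD : ∀ y, dD₀ (dD₁ y) = ∑ k, f k • tD k y)
    (e : ℤˣ) (a₀ : C₀ →ₗ[Q] D₀) (a₁ : C₁ → D₁) (a₂ : C₂ → D₂)
    (h₀ : Fin c → C₁ →ₗ[Q] D₀) (h₁ : Fin c → C₂ → D₁)
    (ha₀ : ∀ x, a₀ (dC₀ x) - (e : ℤ) • dD₀ (a₁ x) = ∑ k, f k • h₀ k x)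
    (ha₁ : ∀ x, a₁ (dC₁ x) - (e : ℤ) • dD₁ (a₂ x) = ∑ k, f k • h₁ k x) (x : C₂) :
    ∑ k, f k • (a₀ (tC k x) - tD k (a₂ x) - h₀ k (dC₁ x) - (e : ℤ) • dD₀ (h₁ k x)) = 0 := by
  have hC' : ∑ k, f k • a₀ (tC k x) = a₀ (dC₀ (dC₁ x)) := by
    simp only [hC, map_sum, map_smul]
  have ha₁' : ∑ k, f k • (e : ℤ) • dD₀ (h₁ k x) =
      (e : ℤ) • dD₀ (a₁ (dC₁ x)) - dD₀ (dD₁ (a₂ x)) := by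
    simp only [smul_comm (f _) (e : ℤ), ← map_smul, ← Finset.smul_sum, ← map_sum, ← ha₁,
      map_sub, map_zsmul, smul_sub, smul_smul, ← Units.val_mul, Int.units_mul_self,
      Units.val_one, one_smul]
  simp only [smul_sub, Finset.sum_sub_distrib, hC', ← hD, ← ha₀, ha₁']
  abel

def castIndex (Q : Type*) [Semiring Q] (M : ℤ → Type*) [∀ n, AddCommMonoid (M n)]
    [∀ n, Module Q (M n)] {a b : ℤ} (h : a = b) : M a →ₗ[Q] M b := by
  subst h; exact LinearMap.id

section castIndex

variable {Q : Type*} [CommRing Q] {M : ℤ → Type*} [∀ n, AddCommGroup (M n)] [∀ n, Module Q (M n)]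

theorem castIndex_castIndex {a b d : ℤ} (h : a = b) (h' : b = d) (x : M a) :
    castIndex Q M h' (castIndex Q M h x) = castIndex Q M (h.trans h') x := by
  subst h h'; rfl

theorem castIndex_map {N : ℤ → Type*} [∀ n, AddCommGroup (N n)] [∀ n, Module Q (N n)]
    (g : ∀ n, M (n + 1) →ₗ[Q] N n) {a b : ℤ} (h : a = b) (h' : a + 1 = b + 1) (x : M (a + 1)) :
    castIndex Q N h (g a x) = g b (castIndex Q M h' x) := by
  subst h; rfl

end castIndex

theorem lcast_one_tmul {Q : Type} [CommRing Q] {c : ℕ} (f : Fin c → Q) (Ct : ℤ → Type)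
    [∀ n, AddCommGroup (Ct n)] [∀ n, Module Q (Ct n)] {a b : ℤ} (h : a = b) (x : Ct a) :
    lcast Q f Ct h (1 ⊗ₜ x) = 1 ⊗ₜ castIndex Q Ct h x := by
  subst h; rfl

/-- post-composition with `ŝ_k` and pre-composition with `t̂_k` induce
the same action on homotopy classes of maps `C → Σʲ D`. -/
theorem eisenbud_operator_actions_agree
    (Q : Type) [CommRing Q] (c : ℕ) (f : Fin c → Q)
    (hreg : RingTheory.Sequence.IsRegular Q (List.ofFn f))
    (Ct Dt : ℤ → Type)
    [∀ n, AddCommGroup (Ct n)] [∀ n, Module Q (Ct n)]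
    [∀ n, AddCommGroup (Dt n)] [∀ n, Module Q (Dt n)]
    (hCfree : ∀ n, Module.Free Q (Ct n))
    (hDfree : ∀ n, Module.Free Q (Dt n))
    (dtC : ∀ n : ℤ, Ct (n + 1) →ₗ[Q] Ct n)
    (dtD : ∀ n : ℤ, Dt (n + 1) →ₗ[Q] Dt n)
    (ttC : Fin c → ∀ n : ℤ, Ct (n + 1 + 1) →ₗ[Q] Ct n)
    (ttD : Fin c → ∀ n : ℤ, Dt (n + 1 + 1) →ₗ[Q] Dt n)
    (hddC : ∀ (n : ℤ) (x : Ct (n + 1 + 1)),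
      dtC n (dtC (n + 1) x) = ∑ k, f k • ttC k n x)
    (hddD : ∀ (n : ℤ) (x : Dt (n + 1 + 1)),
      dtD n (dtD (n + 1) x) = ∑ k, f k • ttD k n x)
    (k : Fin c) (j : ℤ)
    -- a morphism `α : C → Σʲ D` of `K(R)`, given by a chain map representative
    (α : ∀ n : ℤ, (Rquot Q f ⊗[Q] Ct (n + j)) →ₗ[Rquot Q f] (Rquot Q f ⊗[Q] Dt n))
    (hα : ∀ (n : ℤ) (x : Rquot Q f ⊗[Q] Ct (n + j + 1)),
      α n ((dtC (n + j)).baseChange (Rquot Q f) x) =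
        (j.negOnePow : ℤ) •
          (dtD n).baseChange (Rquot Q f)
            (α (n + 1) (lcast Q f Ct (by omega : n + j + 1 = n + 1 + j) x))) :
    -- conclusion: `(Σʲ ŝ_k) ∘ α` and `(Σ²α) ∘ t̂_k` are homotopic as maps `C → Σ^{j+2} D`
    ∃ lam : ∀ n : ℤ,
        (Rquot Q f ⊗[Q] Ct (n + j + 1)) →ₗ[Rquot Q f] (Rquot Q f ⊗[Q] Dt n),
      ∀ (n : ℤ) (x : Rquot Q f ⊗[Q] Ct (n + j + 1 + 1)),
        (ttD k n).baseChange (Rquot Q f)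
            (α (n + 1 + 1) (lcast Q f Ct (by omega : n + j + 1 + 1 = n + 1 + 1 + j) x)) -
          α n ((ttC k (n + j)).baseChange (Rquot Q f) x) =
        (j.negOnePow : ℤ) •
            (dtD n).baseChange (Rquot Q f)
              (lam (n + 1) (lcast Q f Ct (by omega : n + j + 1 + 1 = n + 1 + j + 1) x)) +
          lam n ((dtC (n + j + 1)).baseChange (Rquot Q f) x) := by
  have hregD : ∀ n, IsWeaklyRegular (Dt n) (List.ofFn f) := fun n =>
    have := hDfree n; hreg.toIsWeaklyRegular.of_flat_module (Dt n)
  choose a ha using fun n => have := hCfree (n + j); exists_quotient_lift_of_projective _ (α n)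
  have hdefect : ∀ n x, (a n ∘ₗ dtC (n + j) - (j.negOnePow : ℤ) •
      (dtD n ∘ₗ a (n + 1) ∘ₗ castIndex Q Ct (by omega : n + j + 1 = n + 1 + j))) x ∈
        Ideal.span (Set.range f) • (⊤ : Submodule Q (Dt n)) := by
    intro n x
    have := hα n (1 ⊗ₜ x)
    simp only [LinearMap.baseChange_tmul, ha, lcast_one_tmul, ← tmul_smul] at this
    simpa using (quotient_one_tmul_eq_one_tmul_iff _).1 this
  choose h hh using fun n =>
    have := hCfree (n + j + 1); exists_eq_sum_smul_of_forall_mem_smul_top f _ (hdefect n)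
  refine ⟨fun n => -(h n k).baseChange (Rquot Q f), fun n x => ?_⟩
  obtain ⟨x, rfl⟩ := quotient_one_tmul_surjective _ x
  have h₁ : n + j + 1 = n + 1 + j := by omega
  have h₂ : n + j + 1 + 1 = n + 1 + 1 + j := by omega
  have h₃ : n + j + 1 + 1 = n + 1 + j + 1 := by omega
  have hdefect_succ : ∀ y, a (n + 1) (castIndex Q Ct h₁ (dtC (n + j + 1) y)) -
      (j.negOnePow : ℤ) • dtD (n + 1) (a (n + 1 + 1) (castIndex Q Ct h₂ y)) =
        ∑ i, f i • h (n + 1) i (castIndex Q Ct h₃ y) := fun y => by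
    simp only [castIndex_map dtC h₁ h₃, ← hh (n + 1), LinearMap.sub_apply, LinearMap.comp_apply,
      LinearMap.smul_apply, castIndex_castIndex]
  have hbracket := (hregD n).mem_smul_top_of_sum_smul_eq_zero (sum_smul_eisenbud_bracket_eq_zero f
    (dtC (n + j)) (dtC (n + j + 1)) (ttC · (n + j)) (dtD n) (dtD (n + 1)) (ttD · n)
    (hddC (n + j)) (hddD n) j.negOnePow (a n) _ _ (h n) _ (hh n) hdefect_succ x) k
  simp only [lcast_one_tmul, LinearMap.baseChange_tmul, ha, LinearMap.neg_apply, map_neg,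
    ← tmul_neg, ← tmul_smul, ← tmul_sub, ← tmul_add]
  rw [quotient_one_tmul_eq_one_tmul_iff]
  convert neg_mem hbracket using 1
  module
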